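/- Fix ω_a, ω_b > 0 with ω_a + ω_b = 1. The function r̄(r_a, r_b) = r_a^{ω_a} r_b^{ω_b} / ((1−r_a)^{ω_a}(1−r_b)^{ω_b} + r_a^{ω_a} r_b^{ω_b}) on (0,1)² satisfies min(r_a, r_b) ≤ r̄(r_a, r_b) ≤ max(r_a, r_b). -/

import Mathlib

/-!
With the odds of non-existence `o = (1 - r) / r`, the fused probability is `(1 + G)⁻¹` where
`G = o_a ^ ω_a * o_b ^ ω_b` is a weighted geometric mean of the two odds. `G` lies between the
odds, and `t ↦ (1 + t)⁻¹` is an antitone bijection from `[0, ∞)` onto `(0, 1]` mapping the odds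
`o` back to `r`, so the fused probability lies between `r_a` and `r_b`.
-/

open Real Set

namespace Real

section WeightedGeomMean

variable {x y u v : ℝ}

lemma rpow_mul_rpow_self (hx : 0 ≤ x) (huv : u + v = 1) : x ^ u * x ^ v = x := by
  rw [← rpow_add' hx (by rw [huv]; exact one_ne_zero), huv, rpow_one]

lemma min_le_rpow_mul_rpow (hx : 0 ≤ x) (hy : 0 ≤ y) (hu : 0 ≤ u) (hv : 0 ≤ v)
    (huv : u + v = 1) : min x y ≤ x ^ u * y ^ v :=
  calc min x y = min x y ^ u * min x y ^ v := (rpow_mul_rpow_self (le_min hx hy) huv).symm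
    _ ≤ x ^ u * y ^ v := by
      gcongr
      exacts [min_le_left x y, min_le_right x y]

lemma rpow_mul_rpow_le_max (hx : 0 ≤ x) (hy : 0 ≤ y) (hu : 0 ≤ u) (hv : 0 ≤ v)
    (huv : u + v = 1) : x ^ u * y ^ v ≤ max x y :=
  calc x ^ u * y ^ v ≤ max x y ^ u * max x y ^ v := by
        gcongr
        exacts [le_max_left x y, le_max_right x y]
    _ = max x y := rpow_mul_rpow_self (hx.trans (le_max_left x y)) huv

end WeightedGeomMean

end Real

lemma antitoneOn_inv_one_add : AntitoneOn (fun t : ℝ => (1 + t)⁻¹) (Ici 0) :=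
  fun _ hs _ _ hst => inv_anti₀ (add_pos_of_pos_of_nonneg one_pos hs) (by linarith)

lemma inv_one_add_one_sub_div_self {r : ℝ} (hr : r ≠ 0) : (1 + (1 - r) / r)⁻¹ = r := by
  field_simp
  ring

lemma div_add_eq_inv_one_add_odds_rpow {u v a b : ℝ} (ha : a ∈ Ioo (0 : ℝ) 1)
    (hb : b ∈ Ioo (0 : ℝ) 1) :
    a ^ u * b ^ v / ((1 - a) ^ u * (1 - b) ^ v + a ^ u * b ^ v)
      = (1 + ((1 - a) / a) ^ u * ((1 - b) / b) ^ v)⁻¹ := by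
  obtain ⟨ha0, ha1⟩ := ha
  obtain ⟨hb0, hb1⟩ := hb
  rw [div_rpow (by linarith) ha0.le, div_rpow (by linarith) hb0.le]
  field_simp
  ring

/-- The GCI-fused existence probability with η = 1 lies between the two input
existence probabilities. -/
theorem fused_existence_between
    (ω_a ω_b : ℝ) (hωa : 0 < ω_a) (hωb : 0 < ω_b) (hωsum : ω_a + ω_b = 1)
    (r_a r_b : ℝ) (hra : r_a ∈ Set.Ioo (0:ℝ) 1) (hrb : r_b ∈ Set.Ioo (0:ℝ) 1) :
    min r_a r_b ≤
        r_a ^ ω_a * r_b ^ ω_b /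
          ((1 - r_a) ^ ω_a * (1 - r_b) ^ ω_b + r_a ^ ω_a * r_b ^ ω_b)
      ∧ r_a ^ ω_a * r_b ^ ω_b /
          ((1 - r_a) ^ ω_a * (1 - r_b) ^ ω_b + r_a ^ ω_a * r_b ^ ω_b)
        ≤ max r_a r_b := by
  set o_a := (1 - r_a) / r_a
  set o_b := (1 - r_b) / r_b
  have ho_a : o_a ∈ Ici 0 := div_nonneg (by linarith [hra.2]) hra.1.le
  have ho_b : o_b ∈ Ici 0 := div_nonneg (by linarith [hrb.2]) hrb.1.le
  have hG : o_a ^ ω_a * o_b ^ ω_b ∈ Ici 0 := mul_nonneg (rpow_nonneg ho_a _) (rpow_nonneg ho_b _)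
  have h_min : min r_a r_b = (1 + max o_a o_b)⁻¹ := by
    rw [antitoneOn_inv_one_add.map_max ho_a ho_b, inv_one_add_one_sub_div_self hra.1.ne',
      inv_one_add_one_sub_div_self hrb.1.ne']
  have h_max : max r_a r_b = (1 + min o_a o_b)⁻¹ := by
    rw [antitoneOn_inv_one_add.map_min ho_a ho_b, inv_one_add_one_sub_div_self hra.1.ne',
      inv_one_add_one_sub_div_self hrb.1.ne']
  rw [div_add_eq_inv_one_add_odds_rpow hra hrb, h_min, h_max]
  exact ⟨antitoneOn_inv_one_add hG (mem_Ici.2 (le_max_of_le_left ho_a))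
      (rpow_mul_rpow_le_max ho_a ho_b hωa.le hωb.le hωsum),
    antitoneOn_inv_one_add (mem_Ici.2 (le_min ho_a ho_b)) hG
      (min_le_rpow_mul_rpow ho_a ho_b hωa.le hωb.le hωsum)⟩
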